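/- For all integers h ≥ 1, n with 0 ≤ n < h, and rational x: C(x, n) = Σ_{i=1}^{n} (-1)^{i+1} · C(x-h+i, i) · C(x, n-i) · (h!/(h-i)!) · ((2h-1-i)!/(2h-1)!) + C(x+h, n) · C(h-1, n) / C(2h-1, n). -/

import Mathlib

/-- Generalized binomial coefficient `C(x, k) = x(x-1)⋯(x-k+1)/k!` for rational `x`. -/
noncomputable def gchoose (x : ℚ) (k : ℕ) : ℚ :=
  (∏ i ∈ Finset.range k, (x - i)) / (Nat.factorial k)

/-!
Multiplying by `C(2h-1, h-1)` and using the reflection `C(h-1-x, i) = (-1)^i C(x-h+i, i)`, the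
identity becomes the hypergeometric summation
`∑_{i ≤ n} C(h-1-x, i) C(x, n-i) C(2h-1-i, h-1) = C(x+h, n) C(2h-1-n, h)`.
Both sides satisfy the first-order recurrence
`(n+1)(2h-1-n) S(n+1) = (x+h-n)(h-1-n) S(n)` and agree at `n = 0`; for the left side the
recurrence is proved by a Wilf–Zeilberger certificate, which makes the summands telescope.
-/

open Finset Polynomial
open scoped Nat

lemma gchoose_eq_descPochhammer_eval (x : ℚ) (k : ℕ) :
    gchoose x k = (descPochhammer ℚ k).eval x / k ! := by
  rw [gchoose, descPochhammer_eval_eq_prod_range]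

lemma gchoose_natCast (m k : ℕ) : gchoose m k = m.choose k := by
  rw [gchoose_eq_descPochhammer_eval, Nat.cast_choose_eq_descPochhammer_div]

lemma gchoose_zero (x : ℚ) : gchoose x 0 = 1 := by
  simp [gchoose]

lemma gchoose_succ (x : ℚ) (k : ℕ) : gchoose x (k + 1) = gchoose x k * (x - k) / (k + 1) := by
  rw [gchoose, gchoose, prod_range_succ, Nat.factorial_succ]
  push_cast
  field_simp

lemma gchoose_sub_one_mul (y : ℚ) (k : ℕ) : gchoose (y - 1) k * y = gchoose y k * (y - k) := by
  induction k with
  | zero => simp [gchoose_zero]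
  | succ k ih =>
    rw [gchoose_succ, gchoose_succ]
    push_cast
    linear_combination (y - 1 - k) / (k + 1) * ih

lemma gchoose_reflect (z : ℚ) (k : ℕ) : gchoose (k - 1 - z) k = (-1) ^ k * gchoose z k := by
  rw [gchoose_eq_descPochhammer_eval, gchoose_eq_descPochhammer_eval,
    descPochhammer_eval_eq_ascPochhammer, show (k : ℚ) - 1 - z - k + 1 = -z by ring,
    ascPochhammer_eval_neg_eq_descPochhammer, mul_div_assoc]

lemma choose_sub_div_choose {K : Type*} [Field K] [CharZero K] {N k i : ℕ} (hi : i + k ≤ N) :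
    ((N - i).choose k : K) / N.choose k = (N - k)! / (N - k - i)! * ((N - i)! / N !) := by
  rw [Nat.cast_choose K (by omega : k ≤ N - i), Nat.cast_choose K (by omega : k ≤ N),
    show N - i - k = N - k - i by omega]
  have hk : (k ! : K) ≠ 0 := by exact_mod_cast k.factorial_ne_zero
  field_simp

lemma cast_two_mul_sub_one {h : ℕ} (hh : 1 ≤ h) : ((2 * h - 1 : ℕ) : ℚ) = 2 * h - 1 := by
  rw [Nat.cast_sub (by omega)]
  push_cast
  ring

section WilfZeilberger

variable (h : ℕ) (x : ℚ)

noncomputable def wzTerm (n i : ℕ) : ℚ :=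
  gchoose (h - 1 - x) i * gchoose x (n - i) * gchoose (2 * h - 1 - i) (h - 1)

noncomputable def wzCert (n i : ℕ) : ℚ :=
  -(i * (2 * h - i)) * gchoose (h - 1 - x) i * gchoose x (n + 1 - i) *
    gchoose (2 * h - 1 - i) (h - 1)

noncomputable def wzRhs (n : ℕ) : ℚ :=
  gchoose (x + h) n * gchoose (2 * h - 1 - n) h

lemma wzTerm_recurrence_eq_sub_wzCert {n i : ℕ} (hin : i ≤ n) (hi : i + 1 < 2 * h) :
    (n + 1) * (2 * h - 1 - n) * wzTerm h x (n + 1) i - (x + h - n) * (h - 1 - n) * wzTerm h x n i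
      = wzCert h x n (i + 1) - wzCert h x n i := by
  obtain ⟨k, rfl⟩ : ∃ k, n = i + k := ⟨n - i, by omega⟩
  have hne : (2 * h - 1 - i : ℚ) ≠ 0 := by
    have : (i : ℚ) + 1 < 2 * h := by exact_mod_cast hi
    linarith
  have hC : gchoose (2 * h - 1 - (i + 1)) (h - 1)
      = gchoose (2 * h - 1 - i) (h - 1) * (h - i) / (2 * h - 1 - i) := by
    rw [eq_div_iff hne, show (2 * h - 1 - (i + 1) : ℚ) = 2 * h - 1 - i - 1 by ring,
      gchoose_sub_one_mul, Nat.cast_sub (by omega : 1 ≤ h)]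
    push_cast
    ring
  simp only [wzTerm, wzCert, show i + k + 1 - i = k + 1 by omega, show i + k - i = k by omega,
    show i + k + 1 - (i + 1) = k by omega, gchoose_succ]
  push_cast
  rw [hC]
  field_simp
  ring

lemma wzCert_zero (n : ℕ) : wzCert h x n 0 = 0 := by
  simp [wzCert]

lemma wzTerm_succ_self (n : ℕ) :
    (n + 1) * (2 * h - 1 - n) * wzTerm h x (n + 1) (n + 1) = -wzCert h x n (n + 1) := by
  simp only [wzTerm, wzCert, Nat.sub_self, gchoose_zero]
  push_cast
  ring

lemma sum_wzTerm_recurrence {n : ℕ} (hn : n + 1 < 2 * h) :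
    (n + 1) * (2 * h - 1 - n) * ∑ i ∈ range (n + 2), wzTerm h x (n + 1) i
      = (x + h - n) * (h - 1 - n) * ∑ i ∈ range (n + 1), wzTerm h x n i := by
  have htel : ∑ i ∈ range (n + 1), ((n + 1) * (2 * h - 1 - n) * wzTerm h x (n + 1) i
      - (x + h - n) * (h - 1 - n) * wzTerm h x n i) = wzCert h x n (n + 1) := by
    rw [sum_congr rfl fun i hi => wzTerm_recurrence_eq_sub_wzCert h x
      (Nat.lt_succ_iff.mp (mem_range.mp hi)) (by have := mem_range.mp hi; omega),
      sum_range_sub, wzCert_zero, sub_zero]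
  rw [sum_sub_distrib, ← mul_sum, ← mul_sum] at htel
  rw [sum_range_succ, mul_add, wzTerm_succ_self]
  linarith

lemma wzRhs_recurrence (n : ℕ) :
    (n + 1) * (2 * h - 1 - n) * wzRhs h x (n + 1) = (x + h - n) * (h - 1 - n) * wzRhs h x n := by
  have hC := gchoose_sub_one_mul (2 * h - 1 - n) h
  rw [show (2 * h - 1 - n : ℚ) - h = h - 1 - n by ring] at hC
  simp only [wzRhs, gchoose_succ]
  push_cast
  rw [show (2 * h - 1 - (n + 1) : ℚ) = 2 * h - 1 - n - 1 by ring]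
  field_simp
  linear_combination (x + h - n) * gchoose (x + h) n * hC

lemma sum_wzTerm {n : ℕ} (hn : n < 2 * h) :
    ∑ i ∈ range (n + 1), wzTerm h x n i = wzRhs h x n := by
  induction n with
  | zero =>
    rw [zero_add, sum_range_one]
    simp only [wzTerm, wzRhs, Nat.sub_self, gchoose_zero, Nat.cast_zero, sub_zero, one_mul,
      ← cast_two_mul_sub_one (by omega : 1 ≤ h), gchoose_natCast]
    rw [Nat.choose_symm_of_eq_add (by omega : 2 * h - 1 = (h - 1) + h)]
  | succ n ih =>
    have hpos : (n : ℚ) + 1 < 2 * h := by exact_mod_cast hn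
    have hne : ((n : ℚ) + 1) * (2 * h - 1 - n) ≠ 0 := by
      apply mul_ne_zero <;> linarith
    apply mul_left_cancel₀ hne
    rw [sum_wzTerm_recurrence h x hn, ih (by omega), wzRhs_recurrence]

end WilfZeilberger

section Normalization

variable (h : ℕ) (x : ℚ)

lemma wzTerm_zero {n : ℕ} (hh : 1 ≤ h) :
    wzTerm h x n 0 = gchoose x n * (2 * h - 1).choose (h - 1) := by
  rw [wzTerm, gchoose_zero, one_mul, Nat.sub_zero, Nat.cast_zero, sub_zero,
    ← cast_two_mul_sub_one hh, gchoose_natCast]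

lemma summand_eq_neg_wzTerm_div {n i : ℕ} (hh : 1 ≤ h) (hi : i ≤ h) :
    (-1 : ℚ) ^ (i + 1) * gchoose (x - h + i) i * gchoose x (n - i) * ((h ! : ℚ) / (h - i)!) *
        (((2 * h - 1 - i)! : ℚ) / (2 * h - 1)!)
      = -wzTerm h x n i / (2 * h - 1).choose (h - 1) := by
  have hsign := gchoose_reflect (x - h + i) i
  rw [show (i : ℚ) - 1 - (x - h + i) = h - 1 - x by ring] at hsign
  have hratio := choose_sub_div_choose (K := ℚ) (N := 2 * h - 1) (k := h - 1) (i := i) (by omega)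
  rw [show 2 * h - 1 - (h - 1) = h by omega] at hratio
  have hcast : (2 * h - 1 - i : ℚ) = ((2 * h - 1 - i : ℕ) : ℚ) := by
    rw [Nat.cast_sub (by omega), cast_two_mul_sub_one hh]
  rw [wzTerm, hsign, hcast, gchoose_natCast]
  linear_combination (-1 : ℚ) ^ i * gchoose (x - h + i) i * gchoose x (n - i) * hratio

lemma wzRhs_eq {n : ℕ} (hn : n < h) :
    wzRhs h x n = (2 * h - 1).choose (h - 1) *
      (gchoose (x + h) n * gchoose ((h : ℚ) - 1) n / gchoose (2 * (h : ℚ) - 1) n) := by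
  have hchoose : ((2 * h - 1 - n).choose h * (2 * h - 1).choose n : ℚ)
      = (h - 1).choose n * (2 * h - 1).choose (h - 1) := by
    norm_cast
    rw [Nat.choose_symm_of_eq_add (by omega : 2 * h - 1 - n = h + (h - 1 - n)), mul_comm,
      ← Nat.choose_mul (by omega), mul_comm]
  have hpos : ((2 * h - 1).choose n : ℚ) ≠ 0 := by
    exact_mod_cast (Nat.choose_pos (by omega)).ne'
  have hcast : (2 * h - 1 - n : ℚ) = ((2 * h - 1 - n : ℕ) : ℚ) := by
    rw [Nat.cast_sub (by omega), cast_two_mul_sub_one (by omega)]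
  rw [wzRhs, hcast, ← cast_two_mul_sub_one (by omega), ← Nat.cast_pred (by omega),
    gchoose_natCast, gchoose_natCast, gchoose_natCast]
  field_simp
  linear_combination gchoose (x + h) n * hchoose

end Normalization

theorem stmt9_general (h n : ℕ) (hn : n < h) (x : ℚ) :
    gchoose x n =
      (∑ i ∈ Finset.Icc 1 n, (-1 : ℚ) ^ (i + 1) * gchoose (x - h + i) i *
        gchoose x (n - i) * ((Nat.factorial h : ℚ) / (Nat.factorial (h - i) : ℚ)) *
        ((Nat.factorial (2 * h - 1 - i) : ℚ) / (Nat.factorial (2 * h - 1) : ℚ))) +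
      gchoose (x + h) n * gchoose ((h : ℚ) - 1) n / gchoose (2 * (h : ℚ) - 1) n := by
  have hD : ((2 * h - 1).choose (h - 1) : ℚ) ≠ 0 := by
    exact_mod_cast (Nat.choose_pos (by omega)).ne'
  have hsum := sum_wzTerm h x (n := n) (by omega)
  rw [range_eq_Ico, sum_eq_sum_Ico_succ_bot (by omega : 0 < n + 1), zero_add,
    Ico_add_one_right_eq_Icc, wzTerm_zero h x (by omega), wzRhs_eq h x hn] at hsum
  rw [sum_congr rfl fun i hi => summand_eq_neg_wzTerm_div h x (by omega)
    (by have := mem_Icc.mp hi; omega), ← sum_div, sum_neg_distrib]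
  apply mul_right_cancel₀ hD
  rw [add_mul, div_mul_cancel₀ _ hD]
  linear_combination hsum

theorem stmt9 (h n : ℕ) (hh : 1 ≤ h) (hn : n < h) (x : ℚ) :
    gchoose x n =
      (∑ i ∈ Finset.Icc 1 n, (-1 : ℚ) ^ (i + 1) * gchoose (x - h + i) i *
        gchoose x (n - i) * ((Nat.factorial h : ℚ) / (Nat.factorial (h - i) : ℚ)) *
        ((Nat.factorial (2 * h - 1 - i) : ℚ) / (Nat.factorial (2 * h - 1) : ℚ))) +
      gchoose (x + h) n * gchoose ((h : ℚ) - 1) n / gchoose (2 * (h : ℚ) - 1) n :=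
  stmt9_general h n hn x
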